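/- Let μ > 0, α < 0, N a positive integer, ω > α²/N², and let w(x) = φ_{ω,−a⁰}(x) with a⁰ = (1/(μ√ω)) arctanh(|α|/(N√ω)). Then N ∫₀^∞ ( w'(x)² + ω w(x)² − (2μ+1) w(x)^{2μ+2} ) dx + α w(0)² = −2μ N ∫₀^∞ w(x)^{2μ+2} dx < 0. That is, the quadratic form of L₋ evaluated at the ground state Ψ⁰_ω is strictly negative, so L₋ has at least one negative eigenvalue. -/

import Mathlib

/-!
The profile `w` solves `w'' = (ω - w^{2μ}) w` and decays like `exp(-√ω x)`, so integrating
`(w w')' = w'^2 + ω w^2 - w^{2μ+2}` over `(0, ∞)` turns the quadratic form into the boundary term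
`-w(0) w'(0)` plus `-2μ ∫ w^{2μ+2}`. Since `w' = -√ω tanh(μ√ω (x + a⁰)) w`, the choice of `a⁰` gives
`tanh(μ√ω a⁰) = |α|/(N√ω)`, i.e. the vertex condition `N w'(0) = α w(0)`, and the boundary term
cancels `α w(0)^2`.
-/

open MeasureTheory Set

/-- The soliton profile `φ_{ω,a}(x) = ((μ+1)ω)^{1/(2μ)} sech^{1/μ}(μ√ω (x − a))`. -/
noncomputable def solitonProfile (μ ω a : ℝ) (x : ℝ) : ℝ :=
  ((μ + 1) * ω) ^ (1 / (2 * μ)) *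
    (1 / Real.cosh (μ * Real.sqrt ω * (x - a))) ^ (1 / μ)

/-- The inverse hyperbolic tangent. -/
noncomputable def arctanh (x : ℝ) : ℝ := (1 / 2) * Real.log ((1 + x) / (1 - x))

open Filter Topology

namespace Real

theorem one_sub_tanh_sq (x : ℝ) : 1 - tanh x ^ 2 = (cosh x ^ 2)⁻¹ := by
  have := cosh_sq_sub_sinh_sq x
  rw [tanh_eq_sinh_div_cosh]
  field_simp
  linarith

theorem hasDerivAt_tanh (x : ℝ) : HasDerivAt tanh (1 - tanh x ^ 2) x := by
  have h := (hasDerivAt_sinh x).div (hasDerivAt_cosh x) (cosh_pos x).ne'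
  rw [show sinh / cosh = tanh from funext fun y => (tanh_eq_sinh_div_cosh y).symm] at h
  refine h.congr_deriv ?_
  rw [one_sub_tanh_sq, ← sq, ← sq, cosh_sq_sub_sinh_sq x, one_div]

theorem one_div_cosh_le_two_mul_exp_neg (x : ℝ) : 1 / cosh x ≤ 2 * exp (-x) := by
  rw [div_le_iff₀ (cosh_pos x), cosh_eq, exp_neg]
  field_simp
  nlinarith [exp_pos x]

end Real

theorem tanh_arctanh {r : ℝ} (hr : r ∈ Ioo (-1) 1) : Real.tanh (arctanh r) = r := by
  rw [arctanh, ← Real.artanh_eq_half_log (Ioo_subset_Icc_self hr), Real.tanh_artanh hr]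

section SolitonProfile

variable {μ ω : ℝ}

theorem solitonProfile_pos (hμ : 0 < μ) (hω : 0 < ω) (a x : ℝ) : 0 < solitonProfile μ ω a x := by
  unfold solitonProfile
  positivity

theorem hasDerivAt_solitonProfile (hμ : μ ≠ 0) (a x : ℝ) :
    HasDerivAt (solitonProfile μ ω a)
      (-(√ω * Real.tanh (μ * √ω * (x - a))) * solitonProfile μ ω a x) x := by
  have hcosh : 0 < Real.cosh (μ * √ω * (x - a)) := Real.cosh_pos _
  have hlin : HasDerivAt (fun y => μ * √ω * (y - a)) (μ * √ω) x := by
    simpa using ((hasDerivAt_id x).sub_const a).const_mul (μ * √ω)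
  have hsech : HasDerivAt (fun y => 1 / Real.cosh (μ * √ω * (y - a)))
      (-(Real.sinh (μ * √ω * (x - a)) * (μ * √ω)) / Real.cosh (μ * √ω * (x - a)) ^ 2) x := by
    simpa only [one_div] using hlin.cosh.fun_inv hcosh.ne'
  refine ((hsech.rpow_const (p := 1 / μ) (Or.inl (by positivity))).const_mul
    (((μ + 1) * ω) ^ (1 / (2 * μ)))).congr_deriv ?_
  rw [solitonProfile, Real.rpow_sub (by positivity), Real.rpow_one, Real.tanh_eq_sinh_div_cosh]
  field_simp

theorem deriv_solitonProfile (hμ : μ ≠ 0) (a : ℝ) :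
    deriv (solitonProfile μ ω a) =
      fun x => -(√ω * Real.tanh (μ * √ω * (x - a))) * solitonProfile μ ω a x :=
  funext fun x => (hasDerivAt_solitonProfile hμ a x).deriv

theorem continuous_solitonProfile (hμ : μ ≠ 0) (a : ℝ) : Continuous (solitonProfile μ ω a) :=
  continuous_iff_continuousAt.2 fun x => (hasDerivAt_solitonProfile hμ a x).continuousAt

theorem solitonProfile_rpow_two_mul (hμ : 0 < μ) (hω : 0 ≤ ω) (a x : ℝ) :
    solitonProfile μ ω a x ^ (2 * μ) = (μ + 1) * ω * (1 - Real.tanh (μ * √ω * (x - a)) ^ 2) := by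
  rw [solitonProfile, Real.mul_rpow (by positivity) (by positivity), ← Real.rpow_mul (by positivity),
    ← Real.rpow_mul (by positivity), show 1 / (2 * μ) * (2 * μ) = 1 by field_simp,
    show 1 / μ * (2 * μ) = (2 : ℕ) by field_simp; norm_num, Real.rpow_one, Real.rpow_natCast,
    Real.one_sub_tanh_sq, one_div, inv_pow]

theorem hasDerivAt_deriv_solitonProfile (hμ : 0 < μ) (hω : 0 ≤ ω) (a x : ℝ) :
    HasDerivAt (deriv (solitonProfile μ ω a))
      ((ω - solitonProfile μ ω a x ^ (2 * μ)) * solitonProfile μ ω a x) x := by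
  have hlin : HasDerivAt (fun y => μ * √ω * (y - a)) (μ * √ω) x := by
    simpa using ((hasDerivAt_id x).sub_const a).const_mul (μ * √ω)
  rw [deriv_solitonProfile hμ.ne']
  refine ((((Real.hasDerivAt_tanh _).comp x hlin).const_mul √ω).neg.mul
    (hasDerivAt_solitonProfile hμ.ne' a x)).congr_deriv ?_
  simp only [Pi.neg_apply, Function.comp_apply]
  rw [solitonProfile_rpow_two_mul hμ hω]
  set t := Real.tanh (μ * √ω * (x - a))
  linear_combination (t ^ 2 - μ * (1 - t ^ 2)) * solitonProfile μ ω a x * Real.mul_self_sqrt hω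

theorem solitonProfile_le (hμ : 0 < μ) (hω : 0 ≤ ω) (a x : ℝ) :
    solitonProfile μ ω a x ≤
      ((μ + 1) * ω) ^ (1 / (2 * μ)) * 2 ^ (1 / μ) * Real.exp (-(√ω * (x - a))) := by
  calc solitonProfile μ ω a x ≤
        ((μ + 1) * ω) ^ (1 / (2 * μ)) * (2 * Real.exp (-(μ * √ω * (x - a)))) ^ (1 / μ) := by
        unfold solitonProfile
        gcongr
        exact Real.one_div_cosh_le_two_mul_exp_neg _
    _ = _ := by
      rw [Real.mul_rpow (by norm_num) (Real.exp_pos _).le, ← Real.exp_mul,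
        show -(μ * √ω * (x - a)) * (1 / μ) = -(√ω * (x - a)) by field_simp, mul_assoc]

theorem integrableOn_Ioi_solitonProfile_rpow (hμ : 0 < μ) (hω : 0 < ω) {p : ℝ} (hp : 0 < p)
    (a b : ℝ) : IntegrableOn (fun x => solitonProfile μ ω a x ^ p) (Ioi b) := by
  set C := ((μ + 1) * ω) ^ (1 / (2 * μ)) * 2 ^ (1 / μ)
  refine Integrable.mono' ((exp_neg_integrableOn_Ioi b (mul_pos hp (Real.sqrt_pos.2 hω))).const_mul
      (C ^ p * Real.exp (p * √ω * a)))
    ((continuous_solitonProfile hμ.ne' a).rpow_const fun _ => Or.inr hp.le).aestronglyMeasurable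
    (ae_of_all _ fun x => ?_)
  have hw := (solitonProfile_pos hμ hω a x).le
  rw [Real.norm_of_nonneg (Real.rpow_nonneg hw p)]
  calc solitonProfile μ ω a x ^ p ≤ (C * Real.exp (-(√ω * (x - a)))) ^ p :=
        Real.rpow_le_rpow hw (solitonProfile_le hμ hω.le a x) hp.le
    _ = C ^ p * Real.exp (p * √ω * a) * Real.exp (-(p * √ω) * x) := by
      rw [Real.mul_rpow (by positivity) (Real.exp_pos _).le, ← Real.exp_mul, mul_assoc,
        ← Real.exp_add]
      ring_nf

theorem integrableOn_Ioi_solitonProfile_sq (hμ : 0 < μ) (hω : 0 < ω) (a b : ℝ) :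
    IntegrableOn (fun x => solitonProfile μ ω a x ^ 2) (Ioi b) := by
  simpa only [Real.rpow_two] using integrableOn_Ioi_solitonProfile_rpow hμ hω two_pos a b

theorem integrableOn_Ioi_deriv_solitonProfile_sq (hμ : 0 < μ) (hω : 0 < ω) (a b : ℝ) :
    IntegrableOn (fun x => deriv (solitonProfile μ ω a) x ^ 2) (Ioi b) := by
  have hcont : Continuous (deriv (solitonProfile μ ω a)) := continuous_iff_continuousAt.2
    fun x => (hasDerivAt_deriv_solitonProfile hμ hω.le a x).continuousAt
  refine Integrable.mono' ((integrableOn_Ioi_solitonProfile_sq hμ hω a b).const_mul ω)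
    (hcont.pow 2).aestronglyMeasurable (ae_of_all _ fun x => ?_)
  simp only [deriv_solitonProfile hμ.ne']
  rw [Real.norm_of_nonneg (sq_nonneg _), neg_mul, neg_sq, mul_pow, mul_pow, Real.sq_sqrt hω.le]
  exact mul_le_mul_of_nonneg_right
    (mul_le_of_le_one_right hω.le (Real.tanh_sq_lt_one _).le) (sq_nonneg _)

theorem tendsto_solitonProfile_atTop (hμ : 0 < μ) (hω : 0 < ω) (a : ℝ) :
    Tendsto (solitonProfile μ ω a) atTop (𝓝 0) := by
  have hexp : Tendsto (fun x => Real.exp (-(√ω * (x - a)))) atTop (𝓝 0) :=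
    Real.tendsto_exp_neg_atTop_nhds_zero.comp
      ((tendsto_atTop_add_const_right _ (-a) tendsto_id).const_mul_atTop (Real.sqrt_pos.2 hω))
  refine squeeze_zero (fun x => (solitonProfile_pos hμ hω a x).le)
    (fun x => solitonProfile_le hμ hω.le a x) ?_
  simpa using hexp.const_mul (((μ + 1) * ω) ^ (1 / (2 * μ)) * 2 ^ (1 / μ))

theorem tendsto_solitonProfile_mul_deriv_atTop (hμ : 0 < μ) (hω : 0 < ω) (a : ℝ) :
    Tendsto (fun x => solitonProfile μ ω a x * deriv (solitonProfile μ ω a) x) atTop (𝓝 0) := by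
  have hsq : Tendsto (fun x => √ω * solitonProfile μ ω a x ^ 2) atTop (𝓝 0) := by
    simpa using ((tendsto_solitonProfile_atTop hμ hω a).pow 2).const_mul √ω
  refine squeeze_zero_norm (fun x => ?_) hsq
  simp only [deriv_solitonProfile hμ.ne']
  rw [show ∀ t w : ℝ, w * (-(√ω * t) * w) = -(t * (√ω * w ^ 2)) by intros; ring, norm_neg,
    norm_mul, Real.norm_eq_abs, Real.norm_eq_abs,
    abs_of_nonneg (by positivity : 0 ≤ √ω * solitonProfile μ ω a x ^ 2)]
  exact mul_le_of_le_one_left (by positivity) (Real.abs_tanh_lt_one _).le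

theorem setIntegral_Ioi_solitonProfile_rpow_pos (hμ : 0 < μ) (hω : 0 < ω) {p : ℝ} (hp : 0 < p)
    (a b : ℝ) : 0 < ∫ x in Ioi b, solitonProfile μ ω a x ^ p := by
  have hpos : ∀ x, 0 < solitonProfile μ ω a x ^ p := fun x =>
    Real.rpow_pos_of_pos (solitonProfile_pos hμ hω a x) p
  rw [setIntegral_pos_iff_support_of_nonneg_ae (ae_of_all _ fun x => (hpos x).le)
    (integrableOn_Ioi_solitonProfile_rpow hμ hω hp a b),
    Function.support_eq_univ fun x => (hpos x).ne', univ_inter, Real.volume_Ioi]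
  exact ENNReal.zero_lt_top

theorem setIntegral_Ioi_solitonProfile_quadForm_eq (hμ : 0 < μ) (hω : 0 < ω) (a b : ℝ) :
    ∫ x in Ioi b, (deriv (solitonProfile μ ω a) x ^ 2 + ω * solitonProfile μ ω a x ^ 2
        - (2 * μ + 1) * solitonProfile μ ω a x ^ (2 * μ + 2))
      = -(solitonProfile μ ω a b * deriv (solitonProfile μ ω a) b)
        - 2 * μ * ∫ x in Ioi b, solitonProfile μ ω a x ^ (2 * μ + 2) := by
  set w := solitonProfile μ ω a
  have hpow (x : ℝ) : w x ^ (2 * μ + 2) = w x ^ (2 * μ) * w x ^ 2 := by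
    exact_mod_cast Real.rpow_add_natCast (solitonProfile_pos hμ hω a x).ne' (2 * μ) 2
  have hderiv (x : ℝ) (_ : x ∈ Ici b) : HasDerivAt (fun x => w x * deriv w x)
      ((deriv w x ^ 2 + ω * w x ^ 2 - (2 * μ + 1) * w x ^ (2 * μ + 2))
        + 2 * μ * w x ^ (2 * μ + 2)) x :=
    ((hasDerivAt_solitonProfile hμ.ne' a x).differentiableAt.hasDerivAt.mul
      (hasDerivAt_deriv_solitonProfile hμ hω.le a x)).congr_deriv (by rw [hpow]; ring)
  have hquad : IntegrableOn
      (fun x => deriv w x ^ 2 + ω * w x ^ 2 - (2 * μ + 1) * w x ^ (2 * μ + 2)) (Ioi b) :=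
    ((integrableOn_Ioi_deriv_solitonProfile_sq hμ hω a b).add
    ((integrableOn_Ioi_solitonProfile_sq hμ hω a b).const_mul ω)).sub
    ((integrableOn_Ioi_solitonProfile_rpow hμ hω (p := 2 * μ + 2) (by positivity) a b).const_mul
      (2 * μ + 1))
  have hJ := (integrableOn_Ioi_solitonProfile_rpow hμ hω (p := 2 * μ + 2) (by positivity) a b)
  have hFTC := integral_Ioi_of_hasDerivAt_of_tendsto' hderiv (hquad.add (hJ.const_mul (2 * μ)))
    (tendsto_solitonProfile_mul_deriv_atTop hμ hω a)
  rw [integral_add hquad (hJ.const_mul _), integral_const_mul] at hFTC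
  linarith

end SolitonProfile

theorem solitonProfile_vertex_condition {μ ω α N : ℝ} (hμ : μ ≠ 0) (hN : 0 < N) (hα : α ≤ 0)
    (hω : α ^ 2 / N ^ 2 < ω) :
    N * deriv (solitonProfile μ ω (-(1 / (μ * √ω) * arctanh (|α| / (N * √ω))))) 0
      = α * solitonProfile μ ω (-(1 / (μ * √ω) * arctanh (|α| / (N * √ω)))) 0 := by
  have hω0 : 0 < ω := lt_of_le_of_lt (by positivity) hω
  have hs : 0 < √ω := Real.sqrt_pos.2 hω0
  have hr : |α| / (N * √ω) ∈ Ioo (-1) 1 := by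
    refine ⟨neg_one_lt_zero.trans_le (by positivity), ?_⟩
    rw [div_lt_one (by positivity)]
    refine abs_lt_of_sq_lt_sq ?_ (by positivity)
    rwa [mul_pow, Real.sq_sqrt hω0.le, ← div_lt_iff₀' (by positivity)]
  simp only [deriv_solitonProfile hμ]
  rw [zero_sub, neg_neg,
    show μ * √ω * (1 / (μ * √ω) * arctanh (|α| / (N * √ω))) = arctanh (|α| / (N * √ω)) by
      field_simp,
    tanh_arctanh hr, abs_of_nonpos hα]
  field_simp

theorem stmt_14 (μ α : ℝ) (hμ : 0 < μ) (hα : α < 0) (N : ℕ) (hN : 0 < N)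
    (ω : ℝ) (hω : ω > α ^ 2 / (N : ℝ) ^ 2)
    (a₀ : ℝ) (ha₀ : a₀ = 1 / (μ * Real.sqrt ω) * arctanh (|α| / (N * Real.sqrt ω)))
    (w : ℝ → ℝ) (hw : w = solitonProfile μ ω (-a₀)) :
    -- the quadratic form of `L₋` at the ground state `Ψ⁰_ω` equals
    -- `−2μN ∫₀^∞ w^{2μ+2}` and is strictly negative, so `L₋` has a negative
    -- eigenvalue
    (N : ℝ) * (∫ x in Ioi (0 : ℝ),
        ((deriv w x) ^ 2 + ω * (w x) ^ 2 - (2 * μ + 1) * w x ^ (2 * μ + 2)))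
      + α * (w 0) ^ 2
      = -(2 * μ * N) * ∫ x in Ioi (0 : ℝ), w x ^ (2 * μ + 2) ∧
    (N : ℝ) * (∫ x in Ioi (0 : ℝ),
        ((deriv w x) ^ 2 + ω * (w x) ^ 2 - (2 * μ + 1) * w x ^ (2 * μ + 2)))
      + α * (w 0) ^ 2 < 0 := by
  have hN' : (0 : ℝ) < N := Nat.cast_pos.2 hN
  have hω0 : 0 < ω := lt_of_le_of_lt (by positivity) hω
  have hvertex : N * deriv w 0 = α * w 0 := by
    rw [hw, ha₀]
    exact solitonProfile_vertex_condition hμ.ne' hN' hα.le hω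
  have hJ : 0 < ∫ x in Ioi (0 : ℝ), w x ^ (2 * μ + 2) := by
    rw [hw]
    exact setIntegral_Ioi_solitonProfile_rpow_pos hμ hω0 (by positivity) _ 0
  rw [hw, setIntegral_Ioi_solitonProfile_quadForm_eq hμ hω0, ← hw]
  set J := ∫ x in Ioi (0 : ℝ), w x ^ (2 * μ + 2)
  have hform : (N : ℝ) * (-(w 0 * deriv w 0) - 2 * μ * J) + α * w 0 ^ 2 = -(2 * μ * N) * J := by
    linear_combination -w 0 * hvertex
  refine ⟨hform, hform.trans_lt ?_⟩
  rw [neg_mul, neg_lt_zero]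
  positivity
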